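/- arXiv:0908.4219 — 6 statements merged into one kernel-verified Lean document; each statement's English description precedes it below -/
import Mathlib

section
/- For the quantum walk on a line of length L with nondegenerate eigenvalues, the limiting distribution starting from vertex c equals π(m|c) = ∑_{j=1}^{L} |φ^{(j)}_m|² |φ^{(j)}_c|² = (2 + δ_{m,c} + δ_{m,L+1−c}) / (2(L+1)) for all m, c ∈ {1,…,L}. -/
/-!
Writing `sin² x sin² y` as a combination of `cos 2x`, `cos 2y`, `cos 2(x+y)` and `cos 2(x-y)`
reduces the sum to character sums `∑_{j<N} cos (2π j k / N)`, which equal `N` when `N ∣ k` and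
vanish otherwise (geometric sums of `N`-th roots of unity). For `N = L + 1` and
`1 ≤ a, b ≤ L`, neither `a` nor `b` is divisible by `N`, while `N ∣ a - b` iff `a = b` and
`N ∣ a + b` iff `a + b = N`.
-/

open Finset Real

theorem sum_range_cos_mul_two_pi_div (n : ℕ) (k : ℤ) :
    ∑ j ∈ range n, cos (j * k * (2 * π) / n) = if (n : ℤ) ∣ k then (n : ℝ) else 0 := by
  rcases Nat.eq_zero_or_pos n with rfl | hn
  · simp
  obtain ⟨ζ, hζdef, hζ⟩ : ∃ ζ, ζ = Complex.exp (2 * π * Complex.I / n) ∧ IsPrimitiveRoot ζ n :=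
    ⟨_, rfl, Complex.isPrimitiveRoot_exp n hn.ne'⟩
  have hcos (j : ℕ) : cos (j * k * (2 * π) / n) = ((ζ ^ k) ^ j).re := by
    rw [hζdef, ← Complex.exp_int_mul, ← Complex.exp_nat_mul, ← Complex.exp_ofReal_mul_I_re]
    push_cast
    ring_nf
  have hgeom : ∑ j ∈ range n, (ζ ^ k) ^ j = if (n : ℤ) ∣ k then (n : ℂ) else 0 := by
    split_ifs with hk
    · simp [(hζ.zpow_eq_one_iff_dvd k).2 hk]
    · have hpow : (ζ ^ k) ^ n = 1 := by
        rw [← zpow_natCast, ← zpow_mul, mul_comm, zpow_mul, zpow_natCast, hζ.pow_eq_one, one_zpow]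
      rw [geom_sum_eq (mt (hζ.zpow_eq_one_iff_dvd k).1 hk), hpow, sub_self, zero_div]
  simp_rw [hcos, ← Complex.re_sum, hgeom]
  split_ifs <;> simp

theorem sin_sq_mul_sin_sq (x y : ℝ) :
    sin x ^ 2 * sin y ^ 2 =
      (2 - 2 * cos (2 * x) - 2 * cos (2 * y) + cos (2 * (x + y)) + cos (2 * (x - y))) / 8 := by
  rw [mul_add, mul_sub, cos_add, cos_sub]
  simp only [cos_two_mul, sin_two_mul]
  linear_combination sin y ^ 2 * sin_sq_add_cos_sq x + (1 - cos x ^ 2) * sin_sq_add_cos_sq y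

theorem sum_range_sin_sq_mul_sin_sq (n : ℕ) (a b : ℤ) :
    ∑ j ∈ range n, sin (j * a * π / n) ^ 2 * sin (j * b * π / n) ^ 2 =
      (2 * n - 2 * (if (n : ℤ) ∣ a then (n : ℝ) else 0) - 2 * (if (n : ℤ) ∣ b then (n : ℝ) else 0)
        + (if (n : ℤ) ∣ a + b then (n : ℝ) else 0) + (if (n : ℤ) ∣ a - b then (n : ℝ) else 0)) / 8 := by
  have hterm (j : ℕ) : sin (j * a * π / n) ^ 2 * sin (j * b * π / n) ^ 2 =
      (2 - 2 * cos (j * a * (2 * π) / n) - 2 * cos (j * b * (2 * π) / n)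
        + cos (j * ((a + b : ℤ) : ℝ) * (2 * π) / n) + cos (j * ((a - b : ℤ) : ℝ) * (2 * π) / n)) / 8 := by
    rw [sin_sq_mul_sin_sq]
    push_cast
    ring_nf
  simp only [hterm, ← sum_div, sum_add_distrib, sum_sub_distrib, ← mul_sum,
    sum_range_cos_mul_two_pi_div, sum_const, card_range, nsmul_eq_mul]
  ring

namespace Int

theorem dvd_iff_eq_zero_of_abs_lt {n x : ℤ} (h : |x| < n) : n ∣ x ↔ x = 0 :=
  ⟨fun hx => eq_zero_of_abs_lt_dvd hx h, fun hx => hx ▸ dvd_zero n⟩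

theorem not_dvd_of_pos_of_lt {n a : ℤ} (ha : 0 < a) (han : a < n) : ¬ n ∣ a := by
  rw [dvd_iff_eq_zero_of_abs_lt (abs_lt.2 ⟨by omega, han⟩)]
  exact ha.ne'

theorem dvd_add_iff_eq_of_pos_of_lt {n a b : ℤ} (ha : 0 < a) (han : a < n) (hb : 0 < b)
    (hbn : b < n) : n ∣ a + b ↔ a + b = n := by
  rw [← dvd_sub_self_right, dvd_iff_eq_zero_of_abs_lt (abs_lt.2 ⟨by omega, by omega⟩), sub_eq_zero]

theorem dvd_sub_iff_eq_of_pos_of_lt {n a b : ℤ} (ha : 0 < a) (han : a < n) (hb : 0 < b)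
    (hbn : b < n) : n ∣ a - b ↔ a = b := by
  rw [dvd_iff_eq_zero_of_abs_lt (abs_lt.2 ⟨by omega, by omega⟩), sub_eq_zero]

end Int

theorem stmt_3_general (L : ℕ)
    (φ : Fin L → Fin L → ℝ)
    (hφ : ∀ j k : Fin L,
      φ j k = Real.sqrt (2 / (L + 1)) *
        Real.sin (((j : ℕ) + 1) * ((k : ℕ) + 1) * Real.pi / (L + 1)))
    (m c : Fin L) :
    ∑ j : Fin L, (φ j m) ^ 2 * (φ j c) ^ 2
      = (2 + (if m = c then (1 : ℝ) else 0)
           + (if ((m : ℕ) + 1) + ((c : ℕ) + 1) = L + 1 then (1 : ℝ) else 0))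
        / (2 * (L + 1)) := by
  set a : ℤ := (m : ℕ) + 1
  set b : ℤ := (c : ℕ) + 1
  have hterm (j : Fin L) : φ j m ^ 2 * φ j c ^ 2 = (2 / (L + 1)) ^ 2 *
      (sin ((j + 1) * a * π / (L + 1 : ℕ)) ^ 2 * sin ((j + 1) * b * π / (L + 1 : ℕ)) ^ 2) := by
    rw [hφ, hφ, mul_pow, mul_pow, sq_sqrt (by positivity)]
    push_cast [a, b]
    ring
  -- the `j = 0` term added to complete the range vanishes since `sin 0 = 0`
  have hsum : ∑ j : Fin L, φ j m ^ 2 * φ j c ^ 2 = (2 / (L + 1)) ^ 2 *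
      ∑ j ∈ range (L + 1), sin (j * a * π / (L + 1 : ℕ)) ^ 2 * sin (j * b * π / (L + 1 : ℕ)) ^ 2 := by
    rw [sum_range_succ', sum_range]
    simp [hterm, mul_sum]
  have ha : 0 < a := by omega
  have han : a < (L + 1 : ℕ) := by omega
  have hb : 0 < b := by omega
  have hbn : b < (L + 1 : ℕ) := by omega
  have hab : a + b = (L + 1 : ℕ) ↔ (m : ℕ) + 1 + ((c : ℕ) + 1) = L + 1 := by omega
  have hab' : a = b ↔ m = c := by rw [Fin.ext_iff]; omega
  simp only [hsum, sum_range_sin_sq_mul_sin_sq, Int.not_dvd_of_pos_of_lt ha han,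
    Int.not_dvd_of_pos_of_lt hb hbn, Int.dvd_add_iff_eq_of_pos_of_lt ha han hb hbn,
    Int.dvd_sub_iff_eq_of_pos_of_lt ha han hb hbn, if_false, hab, hab']
  split_ifs <;> push_cast <;> field_simp <;> ring

/-- The limiting distribution of the quantum walk on a line of length `L`:
`π(m|c) = ∑_j (φ^{(j)}_m)² (φ^{(j)}_c)² = (2 + δ_{m,c} + δ_{m,L+1−c}) / (2(L+1))`
(with 1-based indices `m,c ∈ {1,…,L}`, encoded 0-based via `Fin L`). -/
theorem stmt_3 (L : ℕ) (hL : 1 ≤ L)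
    (φ : Fin L → Fin L → ℝ)
    (hφ : ∀ j k : Fin L,
      φ j k = Real.sqrt (2 / (L + 1)) *
        Real.sin (((j : ℕ) + 1) * ((k : ℕ) + 1) * Real.pi / (L + 1)))
    (m c : Fin L) :
    ∑ j : Fin L, (φ j m) ^ 2 * (φ j c) ^ 2
      = (2 + (if m = c then (1 : ℝ) else 0)
           + (if ((m : ℕ) + 1) + ((c : ℕ) + 1) = L + 1 then (1 : ℝ) else 0))
        / (2 * (L + 1)) :=
  stmt_3_general L φ hφ m c
end

section
/- For all y ∈ [0, 1/4] and x ∈ [y, 1/2 − y], one has cos(2πy) − cos(2πx) ≥ 2π(x² − y²). -/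
/-! The difference `cos (2πy) - cos (2πx)` factors as `2 sin (π(x+y)) sin (π(x-y))`; both
arguments lie in `[0, π/2]`, where Jordan's inequality gives `sin (πt) ≥ 2t`, so the difference is
at least `8 (x² - y²) ≥ 2π (x² - y²)`. -/

open Real

lemma two_mul_le_sin_pi_mul {t : ℝ} (ht₀ : 0 ≤ t) (ht₁ : t ≤ 1 / 2) : 2 * t ≤ sin (π * t) := by
  have h := mul_le_sin (x := π * t) (by positivity) (by nlinarith [pi_pos])
  rwa [← mul_assoc, div_mul_cancel₀ _ pi_ne_zero] at h

lemma cos_two_pi_mul_sub_cos_two_pi_mul (x y : ℝ) :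
    cos (2 * π * y) - cos (2 * π * x) = 2 * sin (π * (x + y)) * sin (π * (x - y)) := by
  rw [cos_sub_cos, show (2 * π * y + 2 * π * x) / 2 = π * (x + y) by ring,
    show (2 * π * y - 2 * π * x) / 2 = -(π * (x - y)) by ring, sin_neg]
  ring

/-- For all `y ∈ [0, 1/4]` and `x ∈ [y, 1/2 − y]`,
`cos(2πy) − cos(2πx) ≥ 2π(x² − y²)`. -/
theorem stmt_8 :
    ∀ y ∈ Set.Icc (0 : ℝ) (1 / 4), ∀ x ∈ Set.Icc y (1 / 2 - y),
      2 * Real.pi * (x ^ 2 - y ^ 2) ≤ Real.cos (2 * Real.pi * y) - Real.cos (2 * Real.pi * x) := by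
  rintro y ⟨hy₀, -⟩ x ⟨hyx, hxy⟩
  have h_sum : 2 * (x + y) ≤ sin (π * (x + y)) := two_mul_le_sin_pi_mul (by linarith) (by linarith)
  have h_diff : 2 * (x - y) ≤ sin (π * (x - y)) := two_mul_le_sin_pi_mul (by linarith) (by linarith)
  have h_prod : 4 * ((x + y) * (x - y)) ≤ sin (π * (x + y)) * sin (π * (x - y)) := by
    nlinarith [mul_le_mul h_sum h_diff (by linarith) (by linarith)]
  have h_nonneg : 0 ≤ (x + y) * (x - y) := mul_nonneg (by linarith) (by linarith)
  rw [cos_two_pi_mul_sub_cos_two_pi_mul]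
  calc 2 * π * (x ^ 2 - y ^ 2) = 2 * π * ((x + y) * (x - y)) := by ring
    _ ≤ 2 * 4 * ((x + y) * (x - y)) := by gcongr; exact pi_lt_four.le
    _ ≤ 2 * sin (π * (x + y)) * sin (π * (x - y)) := by linarith
end

section
/- There exists a constant C > 0 such that for every integer L ≥ 8 divisible by 4, the double sum ∑_{j=1}^{L/4} ∑_{k=j+1}^{L/2−j} 1/(cos(2πj/L) − cos(2πk/L)) is at most C·L²·(log L)². -/
/-!
With `a = π(j+k)/L` and `b = π(k-j)/L`, both in `[0, π/2]`, the denominator is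
`cos (a - b) - cos (a + b) = 2 sin a sin b`, and Jordan's inequality `sin t ≥ 2t/π` bounds it
below by `8 (k + j)(k - j) / L² ≥ 16 j (k - j) / L²`. Each summand is therefore at most
`L²/16 · j⁻¹ (k - j)⁻¹`, and the double sum is at most `L²/16` times a product of two harmonic
sums, i.e. `O(L² (log L)²)`.
-/

open Real Finset

theorem mul_le_cos_sub_sub_cos_add {a b : ℝ} (ha₀ : 0 ≤ a) (hb₀ : 0 ≤ b) (ha : a ≤ π / 2)
    (hb : b ≤ π / 2) : 8 / π ^ 2 * (a * b) ≤ cos (a - b) - cos (a + b) := by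
  have hsa := mul_le_sin ha₀ ha
  have hsb := mul_le_sin hb₀ hb
  calc 8 / π ^ 2 * (a * b) = 2 * ((2 / π * a) * (2 / π * b)) := by ring
    _ ≤ 2 * (sin a * sin b) := by gcongr; exact (by positivity : (0 : ℝ) ≤ 2 / π * a).trans hsa
    _ = cos (a - b) - cos (a + b) := by rw [cos_sub, cos_add]; ring

theorem inv_cos_sub_cos_le {x y L : ℝ} (hx : 0 < x) (hxy : x < y) (hL : 2 * (x + y) ≤ L) :
    (cos (2 * π * x / L) - cos (2 * π * y / L))⁻¹ ≤ L ^ 2 / 16 * x⁻¹ * (y - x)⁻¹ := by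
  have hL₀ : 0 < L := by linarith
  have hy : 0 < y := hx.trans hxy
  have hyx : 0 < y - x := sub_pos.mpr hxy
  set a := π * (x + y) / L
  set b := π * (y - x) / L
  have ha : a ≤ π / 2 := by rw [div_le_div_iff₀ hL₀ two_pos]; nlinarith [pi_pos]
  have hb : b ≤ π / 2 := by rw [div_le_div_iff₀ hL₀ two_pos]; nlinarith [pi_pos]
  have hlower : 16 * x * (y - x) / L ^ 2 ≤ cos (2 * π * x / L) - cos (2 * π * y / L) :=
    calc 16 * x * (y - x) / L ^ 2 ≤ 8 * (x + y) * (y - x) / L ^ 2 :=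
          div_le_div_of_nonneg_right (by nlinarith) (by positivity)
      _ = 8 / π ^ 2 * (a * b) := by simp only [a, b]; field_simp
      _ ≤ cos (a - b) - cos (a + b) :=
          mul_le_cos_sub_sub_cos_add (by positivity) (by positivity) ha hb
      _ = cos (2 * π * x / L) - cos (2 * π * y / L) := by simp only [a, b]; ring_nf
  calc (cos (2 * π * x / L) - cos (2 * π * y / L))⁻¹ ≤ (16 * x * (y - x) / L ^ 2)⁻¹ :=
        inv_anti₀ (by positivity) hlower
    _ = L ^ 2 / 16 * x⁻¹ * (y - x)⁻¹ := by field_simp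

theorem sum_Icc_inv_le_one_add_log {n L : ℕ} (hn : n ≤ L) :
    ∑ i ∈ Icc 1 n, (i : ℝ)⁻¹ ≤ 1 + log L := by
  have h := harmonic_le_one_add_log n
  rw [harmonic_eq_sum_Icc] at h
  push_cast at h
  refine h.trans (add_le_add_right ?_ 1)
  rcases n.eq_zero_or_pos with rfl | hn₀
  · simpa using log_natCast_nonneg L
  · exact log_le_log (by exact_mod_cast hn₀) (by exact_mod_cast hn)

theorem sum_Icc_inv_sub_eq (j m : ℕ) :
    ∑ k ∈ Icc (j + 1) m, ((k : ℝ) - j)⁻¹ = ∑ i ∈ Icc 1 (m - j), (i : ℝ)⁻¹ := by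
  rcases lt_or_ge m j with hmj | hjm
  · rw [Icc_eq_empty (by omega), Icc_eq_empty (by omega), sum_empty, sum_empty]
  have hIcc : Icc (j + 1) m = (Icc 1 (m - j)).map (addRightEmbedding j) := by
    rw [map_add_right_Icc]
    congr 1 <;> omega
  rw [hIcc, sum_map]
  refine sum_congr rfl fun i _ => ?_
  simp

theorem sum_inv_cos_sub_cos_le (L : ℕ) :
    ∑ j ∈ Icc 1 (L / 4), ∑ k ∈ Icc (j + 1) (L / 2 - j),
        (cos (2 * π * j / L) - cos (2 * π * k / L))⁻¹
      ≤ (L : ℝ) ^ 2 / 16 * (1 + log L) ^ 2 := by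
  calc ∑ j ∈ Icc 1 (L / 4), ∑ k ∈ Icc (j + 1) (L / 2 - j),
          (cos (2 * π * j / L) - cos (2 * π * k / L))⁻¹
      ≤ ∑ j ∈ Icc 1 (L / 4), ∑ k ∈ Icc (j + 1) (L / 2 - j),
          (L : ℝ) ^ 2 / 16 * (j : ℝ)⁻¹ * ((k : ℝ) - j)⁻¹ := by
        refine sum_le_sum fun j hj => sum_le_sum fun k hk => ?_
        rw [mem_Icc] at hj hk
        exact inv_cos_sub_cos_le (by exact_mod_cast hj.1) (by exact_mod_cast hk.1)
          (by exact_mod_cast (by omega : 2 * (j + k) ≤ L))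
    _ = (L : ℝ) ^ 2 / 16 * ∑ j ∈ Icc 1 (L / 4),
          (j : ℝ)⁻¹ * ∑ i ∈ Icc 1 (L / 2 - j - j), (i : ℝ)⁻¹ := by
        simp only [mul_sum, ← sum_Icc_inv_sub_eq, mul_assoc]
    _ ≤ (L : ℝ) ^ 2 / 16 * ∑ j ∈ Icc 1 (L / 4), (j : ℝ)⁻¹ * (1 + log L) := by
        gcongr with j
        exact sum_Icc_inv_le_one_add_log (by omega)
    _ ≤ (L : ℝ) ^ 2 / 16 * (1 + log L) ^ 2 := by
        rw [← sum_mul, sq (1 + log (L : ℝ))]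
        gcongr
        exact sum_Icc_inv_le_one_add_log (by omega)

/-- There is a constant `C > 0` such that for every integer `L ≥ 8` divisible by 4,
`∑_{j=1}^{L/4} ∑_{k=j+1}^{L/2−j} 1/(cos(2πj/L) − cos(2πk/L)) ≤ C·L²·(log L)²`. -/
theorem stmt_10 :
    ∃ C : ℝ, 0 < C ∧ ∀ L : ℕ, 8 ≤ L → 4 ∣ L →
      ∑ j ∈ Finset.Icc 1 (L / 4), ∑ k ∈ Finset.Icc (j + 1) (L / 2 - j),
          (Real.cos (2 * Real.pi * j / L) - Real.cos (2 * Real.pi * k / L))⁻¹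
        ≤ C * (L : ℝ) ^ 2 * Real.log L ^ 2 := by
  refine ⟨1 / 4, by norm_num, fun L hL _ => (sum_inv_cos_sub_cos_le L).trans ?_⟩
  have hlog : 1 ≤ log L := by
    rw [le_log_iff_exp_le (by positivity)]
    calc exp 1 ≤ 3 := (exp_one_lt_d9.trans (by norm_num)).le
      _ ≤ L := by exact_mod_cast (by omega : 3 ≤ L)
  calc (L : ℝ) ^ 2 / 16 * (1 + log L) ^ 2 ≤ (L : ℝ) ^ 2 / 16 * (2 * log L) ^ 2 := by
        gcongr; linarith
    _ = 1 / 4 * (L : ℝ) ^ 2 * log L ^ 2 := by ring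
end

section
/- There exists a constant C > 0 such that for all L divisible by 4 with L ≥ 8, the sum over all pairs (j,k), 0 ≤ j,k ≤ L−1, with λ_j ≠ λ_k of 1/|λ_j − λ_k|, where λ_j = -2cos(2πj/L), is at most C·L²·(log L)². -/
/-!
With `θ = π / L`, the identity `λ_j - λ_k = 4 sin((j + k)θ) sin((j - k)θ)` and Jordan's
inequality `|sin(nθ)| ≥ 2‖n‖ / L`, where `‖n‖` is the distance from `n` to `Lℤ`, bound every
nonzero term by `(L² / 16) w(j + k) w(j - k)` with `w(x) = 1 / ‖x‖` on `ℤ/L`. In a cyclic group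
doubling has kernel of size at most two, so `(j, k) ↦ (j + k, j - k)` is at most two-to-one and
the double sum of `w(j + k) w(j - k)` is at most `2 (∑ w)²`. Finally
`∑ w ≤ 2 H_L ≤ 2 (1 + log L)`.
-/

open Finset Real

theorem AddMonoidHom.sum_comp_le_card_ker_mul {G H : Type*} [AddGroup G] [Fintype G]
    [AddMonoid H] [Fintype H] [DecidableEq H] (φ : G →+ H) {F : H → ℝ}
    (hF : ∀ h, 0 ≤ F h) :
    ∑ g, F (φ g) ≤ #{g | φ g = 0} * ∑ h, F h := by
  rw [← sum_fiberwise' univ φ F, mul_sum]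
  refine sum_le_sum fun h _ ↦ ?_
  rw [sum_const, nsmul_eq_mul]
  refine mul_le_mul_of_nonneg_right ?_ (hF h)
  by_cases hh : h ∈ Set.range φ
  · exact_mod_cast (AddMonoidHom.card_fiber_eq_of_mem_range φ hh ⟨0, map_zero φ⟩).le
  · simp only [Set.mem_range, not_exists] at hh
    simp [hh]

theorem sum_sum_mul_add_sub_le {G : Type*} [AddCommGroup G] [Fintype G] [IsAddCyclic G]
    {f : G → ℝ} (hf : ∀ x, 0 ≤ f x) :
    ∑ a, ∑ b, f (a + b) * f (a - b) ≤ 2 * (∑ x, f x) ^ 2 := by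
  classical
  have hfiber (c : G) : ∑ a, f (2 • a - c) ≤ 2 * ∑ x, f x := by
    have hker := (nsmulAddMonoidHom (α := G) 2).sum_comp_le_card_ker_mul
      (F := fun y ↦ f (y - c)) fun _ ↦ hf _
    have hcard : #{a : G | 2 • a = 0} ≤ 2 := IsAddCyclic.card_nsmul_eq_zero_le two_pos
    simp only [nsmulAddMonoidHom_apply] at hker
    rw [show ∑ y, f (y - c) = ∑ x, f x from (Equiv.subRight c).sum_comp f] at hker
    refine hker.trans (mul_le_mul_of_nonneg_right ?_ (sum_nonneg fun x _ ↦ hf x))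
    exact_mod_cast hcard
  calc ∑ a, ∑ b, f (a + b) * f (a - b) = ∑ a, ∑ c, f c * f (2 • a - c) := by
        refine sum_congr rfl fun a _ ↦ ?_
        rw [← (Equiv.subRight a).sum_comp]
        refine sum_congr rfl fun c _ ↦ ?_
        rw [Equiv.subRight_apply, add_sub_cancel, two_nsmul, sub_sub_eq_add_sub]
    _ = ∑ c, f c * ∑ a, f (2 • a - c) := by
        rw [sum_comm]; simp only [mul_sum]
    _ ≤ ∑ c, f c * (2 * ∑ x, f x) := by gcongr with c; exacts [hf c, hfiber c]
    _ = 2 * (∑ x, f x) ^ 2 := by rw [← sum_mul]; ring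

theorem neg_two_mul_cos_sub_neg_two_mul_cos (x y : ℝ) :
    -2 * cos x - -2 * cos y = 4 * sin ((x + y) / 2) * sin ((x - y) / 2) := by
  rw [show -2 * cos x - -2 * cos y = -2 * (cos x - cos y) by ring, cos_sub_cos]
  ring

section Circle

variable {L : ℕ} [NeZero L]

theorem ZMod.sum_natCast_fin {M : Type*} [AddCommMonoid M] (g : ZMod L → M) :
    ∑ j : Fin L, g (j.val : ZMod L) = ∑ x, g x := by
  obtain ⟨n, rfl⟩ := Nat.exists_eq_succ_of_ne_zero (NeZero.ne L)
  exact sum_congr rfl fun j _ ↦ congrArg g (ZMod.natCast_zmod_val (n := n + 1) j)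

theorem ZMod.sum_val_eq_sum_range {M : Type*} [AddCommMonoid M] (g : ℕ → M) :
    ∑ x : ZMod L, g x.val = ∑ i ∈ range L, g i := by
  rw [← ZMod.sum_natCast_fin, ← Fin.sum_univ_eq_sum_range]
  simp only [ZMod.val_natCast_of_lt (Fin.is_lt _)]

theorem abs_sin_pi_mul_div_eq_abs_sin_valMinAbs (n : ℤ) :
    |sin (π * n / L)| = |sin (π * (n : ZMod L).valMinAbs / L)| := by
  obtain ⟨m, hm⟩ : (L : ℤ) ∣ n - (n : ZMod L).valMinAbs := by
    rw [← ZMod.intCast_eq_intCast_iff_dvd_sub, ZMod.coe_valMinAbs]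
  have hL : (L : ℝ) ≠ 0 := Nat.cast_ne_zero.mpr (NeZero.ne L)
  have hn : π * n / L = π * (n : ZMod L).valMinAbs / L + m * π := by
    have hn : (n : ℝ) = (n : ZMod L).valMinAbs + L * m := by
      exact_mod_cast (by linarith : n = (n : ZMod L).valMinAbs + L * m)
    rw [hn]
    field_simp
  rw [hn, sin_add_int_mul_pi, abs_mul, abs_neg_one_zpow, one_mul]

theorem two_mul_natAbs_valMinAbs_div_le_abs_sin (n : ℤ) :
    2 * (n : ZMod L).valMinAbs.natAbs / L ≤ |sin (π * n / L)| := by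
  set v := (n : ZMod L).valMinAbs
  have hL : (0 : ℝ) < L := Nat.cast_pos.mpr (Nat.pos_of_neZero L)
  have hv : (v.natAbs : ℝ) ≤ L / 2 :=
    (Nat.cast_le.mpr (ZMod.natAbs_valMinAbs_le _)).trans (Nat.cast_div_le)
  have habs : |π * v / L| = π * v.natAbs / L := by
    rw [abs_div, abs_mul, abs_of_pos pi_pos, abs_of_pos hL, Nat.cast_natAbs, Int.cast_abs]
  rw [abs_sin_pi_mul_div_eq_abs_sin_valMinAbs]
  calc 2 * (v.natAbs : ℝ) / L = 2 / π * |π * v / L| := by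
        rw [habs]; field_simp
    _ ≤ |sin (π * v / L)| := by
        refine mul_abs_le_abs_sin ?_
        rw [habs, div_le_iff₀ hL]
        nlinarith [pi_pos]

theorem natAbs_valMinAbs_pos_of_sin_ne_zero (n : ℤ) (h : sin (π * n / L) ≠ 0) :
    0 < (n : ZMod L).valMinAbs.natAbs := by
  refine Nat.pos_of_ne_zero fun h₀ ↦ h ?_
  rw [← abs_eq_zero, abs_sin_pi_mul_div_eq_abs_sin_valMinAbs, Int.natAbs_eq_zero.mp h₀]
  simp

theorem sum_inv_natAbs_valMinAbs_le :
    ∑ x : ZMod L, (x.valMinAbs.natAbs : ℝ)⁻¹ ≤ 2 * harmonic L := by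
  have hterm (x : ZMod L) :
      (x.valMinAbs.natAbs : ℝ)⁻¹ ≤ (x.val : ℝ)⁻¹ + ((L - x.val : ℕ) : ℝ)⁻¹ := by
    rw [ZMod.valMinAbs_natAbs_eq_min, Nat.cast_min]
    rcases min_choice (x.val : ℝ) ((L - x.val : ℕ) : ℝ) with h | h <;> rw [h]
    · exact le_add_of_nonneg_right (by positivity)
    · exact le_add_of_nonneg_left (by positivity)
  have hharm : (harmonic L : ℝ) = ∑ i ∈ range L, ((L - i : ℕ) : ℝ)⁻¹ := by
    rw [harmonic, ← sum_range_reflect]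
    push_cast
    refine sum_congr rfl fun i hi ↦ ?_
    rw [mem_range] at hi
    rw [show L - i = L - 1 - i + 1 by omega, Nat.cast_succ]
  have hval : ∑ i ∈ range L, (i : ℝ)⁻¹ ≤ harmonic L := by
    obtain ⟨n, rfl⟩ := Nat.exists_eq_succ_of_ne_zero (NeZero.ne L)
    rw [sum_range_succ', Nat.cast_zero, inv_zero, add_zero, harmonic_succ, harmonic]
    push_cast
    exact le_add_of_nonneg_right (by positivity)
  calc ∑ x : ZMod L, (x.valMinAbs.natAbs : ℝ)⁻¹
      ≤ ∑ x : ZMod L, ((x.val : ℝ)⁻¹ + ((L - x.val : ℕ) : ℝ)⁻¹) :=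
        sum_le_sum fun x _ ↦ hterm x
    _ = ∑ i ∈ range L, (i : ℝ)⁻¹ + harmonic L := by
        rw [sum_add_distrib, hharm, ZMod.sum_val_eq_sum_range (fun i ↦ (i : ℝ)⁻¹),
          ZMod.sum_val_eq_sum_range (fun i ↦ ((L - i : ℕ) : ℝ)⁻¹)]
    _ ≤ 2 * harmonic L := by linarith

theorem inv_abs_neg_two_mul_cos_sub_le (j k : ℕ)
    (h : -2 * cos (2 * π * j / L) ≠ -2 * cos (2 * π * k / L)) :
    |-2 * cos (2 * π * j / L) - -2 * cos (2 * π * k / L)|⁻¹ ≤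
      L ^ 2 / 16 * ((j + k : ZMod L).valMinAbs.natAbs : ℝ)⁻¹ *
        ((j - k : ZMod L).valMinAbs.natAbs : ℝ)⁻¹ := by
  set d₁ := (j + k : ZMod L).valMinAbs.natAbs
  set d₂ := (j - k : ZMod L).valMinAbs.natAbs
  have hL : (0 : ℝ) < L := Nat.cast_pos.mpr (Nat.pos_of_neZero L)
  have hdiff : -2 * cos (2 * π * j / L) - -2 * cos (2 * π * k / L) =
      4 * sin (π * ((j + k : ℤ) : ℝ) / L) * sin (π * ((j - k : ℤ) : ℝ) / L) := by
    rw [neg_two_mul_cos_sub_neg_two_mul_cos]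
    push_cast
    ring_nf
  rw [← sub_ne_zero, hdiff] at h
  obtain ⟨h₁, h₂⟩ := mul_ne_zero_iff.mp h
  have hd₁ : 0 < d₁ := by
    simpa only [Int.cast_add, Int.cast_natCast] using
      natAbs_valMinAbs_pos_of_sin_ne_zero (L := L) _ (right_ne_zero_of_mul h₁)
  have hd₂ : 0 < d₂ := by
    simpa only [Int.cast_sub, Int.cast_natCast] using
      natAbs_valMinAbs_pos_of_sin_ne_zero (L := L) _ h₂
  have hs₁ : 2 * (d₁ : ℝ) / L ≤ |sin (π * ((j + k : ℤ) : ℝ) / L)| := by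
    simpa only [Int.cast_add, Int.cast_natCast] using
      two_mul_natAbs_valMinAbs_div_le_abs_sin (L := L) ((j : ℤ) + k)
  have hs₂ : 2 * (d₂ : ℝ) / L ≤ |sin (π * ((j - k : ℤ) : ℝ) / L)| := by
    simpa only [Int.cast_sub, Int.cast_natCast] using
      two_mul_natAbs_valMinAbs_div_le_abs_sin (L := L) ((j : ℤ) - k)
  calc |-2 * cos (2 * π * j / L) - -2 * cos (2 * π * k / L)|⁻¹
      ≤ (4 * (2 * (d₁ : ℝ) / L) * (2 * (d₂ : ℝ) / L))⁻¹ := by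
        rw [hdiff, abs_mul, abs_mul, abs_of_pos four_pos]
        gcongr
    _ = L ^ 2 / 16 * (d₁ : ℝ)⁻¹ * (d₂ : ℝ)⁻¹ := by
        field_simp
        ring

end Circle

/-- There is a constant `C > 0` such that for all `L ≥ 8` divisible by 4, the sum over
all ordered pairs `(j,k)`, `0 ≤ j,k ≤ L−1`, with `λ_j ≠ λ_k` of `1/|λ_j − λ_k|`, where
`λ_j = -2cos(2πj/L)`, is at most `C·L²·(log L)²`. -/
theorem stmt_11 :
    ∃ C : ℝ, 0 < C ∧ ∀ L : ℕ, 8 ≤ L → 4 ∣ L →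
      ∀ lam : Fin L → ℝ,
        (∀ j : Fin L, lam j = -2 * Real.cos (2 * Real.pi * (j : ℕ) / L)) →
        ∑ j : Fin L, ∑ k : Fin L,
            (if lam j ≠ lam k then |lam j - lam k|⁻¹ else 0)
          ≤ C * (L : ℝ) ^ 2 * Real.log L ^ 2 := by
  refine ⟨2, two_pos, fun L hL _ lam hlam ↦ ?_⟩
  have : NeZero L := ⟨by omega⟩
  set w : ZMod L → ℝ := fun x ↦ (x.valMinAbs.natAbs : ℝ)⁻¹
  have hlog : 1 ≤ log L := by
    rw [le_log_iff_exp_le (by positivity)]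
    exact exp_one_lt_three.le.trans (by norm_cast; omega)
  have hsum : ∑ x, w x ≤ 4 * log L :=
    calc ∑ x, w x ≤ 2 * harmonic L := sum_inv_natAbs_valMinAbs_le
      _ ≤ 2 * (1 + log L) := by gcongr; exact harmonic_le_one_add_log L
      _ ≤ 4 * log L := by linarith
  calc ∑ j, ∑ k, (if lam j ≠ lam k then |lam j - lam k|⁻¹ else 0)
      ≤ ∑ j : Fin L, ∑ k : Fin L,
          L ^ 2 / 16 * (w (j.val + k.val : ZMod L) * w (j.val - k.val : ZMod L)) := by
        gcongr with j _ k _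
        split_ifs with h
        · rw [hlam, hlam] at h ⊢
          rw [← mul_assoc]
          exact inv_abs_neg_two_mul_cos_sub_le j k h
        · positivity
    _ = L ^ 2 / 16 * ∑ a, ∑ b, w (a + b) * w (a - b) := by
        simp only [← mul_sum]
        rw [← ZMod.sum_natCast_fin]
        exact congrArg _ (sum_congr rfl fun (j : Fin L) _ ↦
          ZMod.sum_natCast_fin fun b : ZMod L ↦ w (j.val + b) * w (j.val - b))
    _ ≤ L ^ 2 / 16 * (2 * (∑ x, w x) ^ 2) := by
        gcongr
        exact sum_sum_mul_add_sub_le fun x ↦ by positivity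
    _ ≤ L ^ 2 / 16 * (2 * (4 * log L) ^ 2) := by gcongr
    _ = 2 * L ^ 2 * log L ^ 2 := by ring
end

section
/- Time-averaged convergence of a quantum walk (Aharonov–Ambainis–Kempe–Vazirani Lemma 4.3, continuous-time version): let H be a Hermitian N×N matrix with orthonormal eigenbasis {φ^{(j)}} and eigenvalues {λ_j}, and let p_τ(m|c) = |⟨m| e^{-iHτ} |c⟩|², π(m|c) = ∑_{(j,k): λ_j = λ_k} φ^{(j)}_m \overline{φ^{(j)}_c} \overline{φ^{(k)}_m} φ^{(k)}_c. Then for any T > 0, ∑_{m=1}^{N} | (1/T)∫_0^T p_τ(m|c) dτ − π(m|c) | ≤ (2/T) ∑_{(j,k): λ_j ≠ λ_k} |φ^{(j)}_c|² / |λ_j − λ_k|. -/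
/-!
Diagonalising `H`, the amplitude `⟨m|e^{-iHτ}|c⟩` is `∑_j e^{-iλ_j τ} a_j` with
`a_j = φ^{(j)}_m (φ^{(j)}_c)*`, so `p_τ(m|c) = ∑_{j,k} a_j (a_k)* e^{-i(λ_j-λ_k)τ}`. Time-averaging
keeps the resonant pairs `λ_j = λ_k`, which sum to `π(m|c)`, and damps every other pair by
`|(e^{-iωT} - 1)/(ωT)| ≤ 2/(|ω|T)`. Summing over `m`, orthonormality gives
`∑_m |φ^{(j)}_m| |φ^{(k)}_m| ≤ 1`, and `|φ^{(j)}_c| |φ^{(k)}_c| ≤ (|φ^{(j)}_c|² + |φ^{(k)}_c|²)/2`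
together with the symmetry of `|λ_j - λ_k|` turns the cross products into squares.
-/

open Complex Finset
open scoped ComplexConjugate Matrix

theorem Matrix.exp_smul_apply_of_orthonormal {n : Type*} [Fintype n] [DecidableEq n]
    (μ : n → ℂ) (φ : n → n → ℂ)
    (horth : ∀ j k, ∑ m, φ j m * conj (φ k m) = if j = k then 1 else 0)
    (H : Matrix n n ℂ) (hH : ∀ m m', H m m' = ∑ j, μ j * φ j m * conj (φ j m'))
    (z : ℂ) (m c : n) :
    NormedSpace.exp (z • H) m c = ∑ j, cexp (z * μ j) * (φ j m * conj (φ j c)) := by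
  set V : Matrix n n ℂ := Matrix.of fun m j => φ j m
  have hVV : Vᴴ * V = 1 := by
    ext j k
    simpa [V, Matrix.mul_apply, Matrix.one_apply, mul_comm, eq_comm] using horth k j
  have hVinv : V⁻¹ = Vᴴ := Matrix.inv_eq_left_inv hVV
  have hunit : IsUnit V :=
    (Matrix.isUnit_iff_isUnit_det V).mpr (Matrix.isUnit_det_of_left_inverse hVV)
  have hdiag : z • H = V * Matrix.diagonal (fun j => z * μ j) * V⁻¹ := by
    ext a b
    rw [Matrix.mul_apply]
    simp only [hVinv, V, Matrix.mul_diagonal, hH, Matrix.smul_apply, smul_eq_mul, mul_sum,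
      Matrix.conjTranspose_apply, Matrix.of_apply, RCLike.star_def]
    exact sum_congr rfl fun j _ => by ring
  rw [hdiag, Matrix.exp_conj V _ hunit, Matrix.exp_diagonal, hVinv, Matrix.mul_apply]
  simp only [V, Matrix.mul_diagonal, Pi.exp_def, ← Complex.exp_eq_exp_ℂ,
    Matrix.conjTranspose_apply, Matrix.of_apply, RCLike.star_def]
  exact sum_congr rfl fun j _ => by ring

theorem norm_integral_cexp_neg_I_mul_le {ω : ℝ} (hω : ω ≠ 0) (T : ℝ) :
    ‖∫ τ in (0 : ℝ)..T, cexp (-I * τ * ω)‖ ≤ 2 / |ω| := by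
  have hc : -I * ω ≠ 0 := by simp [hω]
  have hunit : ‖cexp (-I * ω * T)‖ = 1 := by
    rw [show -I * ω * T = ((-(ω * T) : ℝ) : ℂ) * I by push_cast; ring]
    exact norm_exp_ofReal_mul_I _
  calc ‖∫ τ in (0 : ℝ)..T, cexp (-I * τ * ω)‖
      = ‖(cexp (-I * ω * T) - 1) / (-I * ω)‖ := by
        simp_rw [mul_right_comm (-I)]
        rw [integral_exp_mul_complex hc, ofReal_zero, mul_zero, exp_zero]
    _ ≤ (‖cexp (-I * ω * T)‖ + ‖(1 : ℂ)‖) / |ω| := by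
        rw [norm_div, norm_mul, norm_neg, norm_I, one_mul, norm_real, Real.norm_eq_abs]
        gcongr
        exact norm_sub_le _ _
    _ = 2 / |ω| := by rw [hunit, norm_one]; norm_num

theorem ofReal_norm_sum_sq {ι : Type*} (s : Finset ι) (x : ι → ℂ) :
    ((‖∑ j ∈ s, x j‖ ^ 2 : ℝ) : ℂ) = ∑ j ∈ s, ∑ k ∈ s, x j * conj (x k) := by
  rw [ofReal_pow, ← mul_conj', map_sum, sum_mul_sum]

theorem ofReal_integral_norm_sum_sq {ι : Type*} [Fintype ι] (lam : ι → ℝ) (a : ι → ℂ) (T : ℝ) :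
    ((∫ τ in (0 : ℝ)..T, ‖∑ j, cexp (-I * τ * lam j) * a j‖ ^ 2 : ℝ) : ℂ)
      = ∑ j, ∑ k, a j * conj (a k) * ∫ τ in (0 : ℝ)..T, cexp (-I * τ * (lam j - lam k : ℝ)) := by
  have hphase : ∀ (τ : ℝ) j k, cexp (-I * τ * lam j) * a j * conj (cexp (-I * τ * lam k) * a k)
      = a j * conj (a k) * cexp (-I * τ * (lam j - lam k : ℝ)) := by
    intro τ j k
    rw [map_mul, ← exp_conj, mul_mul_mul_comm, ← exp_add, mul_comm]
    congr 2
    simp only [map_mul, map_neg, conj_I, conj_ofReal]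
    push_cast; ring
  have hint : ∀ ω : ℝ,
      IntervalIntegrable (fun τ : ℝ => cexp (-I * τ * ω)) MeasureTheory.volume 0 T :=
    fun ω => (by fun_prop : Continuous fun τ : ℝ => cexp (-I * τ * ω)).intervalIntegrable _ _
  rw [← intervalIntegral.integral_ofReal]
  simp_rw [ofReal_norm_sum_sq, hphase]
  rw [intervalIntegral.integral_finsetSum fun j _ => ?_]
  · refine sum_congr rfl fun j _ => ?_
    rw [intervalIntegral.integral_finsetSum fun k _ => (hint _).const_mul _]
    simp_rw [intervalIntegral.integral_const_mul]
  · exact Continuous.intervalIntegrable (by fun_prop) _ _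

/-- Since `|0|⁻¹ = 0`, the resonant pairs `lam j = lam k` drop out of the bound. -/
theorem norm_timeAverage_sub_le {ι : Type*} [Fintype ι] (lam : ι → ℝ) (a : ι → ℂ) {T : ℝ}
    (hT : 0 < T) :
    ‖((T⁻¹ * ∫ τ in (0 : ℝ)..T, ‖∑ j, cexp (-I * τ * lam j) * a j‖ ^ 2 : ℝ) : ℂ)
        - ∑ j, ∑ k, (if lam j = lam k then a j * conj (a k) else 0)‖
      ≤ 2 / T * ∑ j, ∑ k, ‖a j‖ * ‖a k‖ * |lam j - lam k|⁻¹ := by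
  have hterm : ∀ j k, ‖(T : ℂ)⁻¹ * (a j * conj (a k) * ∫ τ in (0 : ℝ)..T,
        cexp (-I * τ * (lam j - lam k : ℝ))) - (if lam j = lam k then a j * conj (a k) else 0)‖
      ≤ 2 / T * (‖a j‖ * ‖a k‖ * |lam j - lam k|⁻¹) := by
    intro j k
    by_cases h : lam j = lam k
    · have hT' : (T : ℂ) ≠ 0 := ofReal_ne_zero.mpr hT.ne'
      have hres : ∫ τ in (0 : ℝ)..T, cexp (-I * τ * (lam j - lam k : ℝ)) = T := by simp [h]
      rw [if_pos h, hres, mul_left_comm, inv_mul_cancel₀ hT', mul_one, sub_self, norm_zero]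
      positivity
    · rw [if_neg h, sub_zero, norm_mul, norm_mul, norm_mul, norm_conj, norm_inv, norm_real,
        Real.norm_of_nonneg hT.le]
      have hphase := norm_integral_cexp_neg_I_mul_le (sub_ne_zero.mpr h) T
      calc T⁻¹ * (‖a j‖ * ‖a k‖ * ‖∫ τ in (0 : ℝ)..T, cexp (-I * τ * (lam j - lam k : ℝ))‖)
          ≤ T⁻¹ * (‖a j‖ * ‖a k‖ * (2 / |lam j - lam k|)) := by gcongr
        _ = 2 / T * (‖a j‖ * ‖a k‖ * |lam j - lam k|⁻¹) := by ring
  rw [ofReal_mul, ofReal_integral_norm_sum_sq, ofReal_inv, mul_sum, ← sum_sub_distrib, mul_sum]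
  refine (norm_sum_le _ _).trans (sum_le_sum fun j _ => ?_)
  rw [mul_sum, mul_sum, ← sum_sub_distrib]
  exact (norm_sum_le _ _).trans (sum_le_sum fun k _ => hterm j k)

theorem sum_norm_mul_norm_le_one {n : Type*} [Fintype n] {u v : n → ℂ}
    (hu : ∑ m, u m * conj (u m) = 1) (hv : ∑ m, v m * conj (v m) = 1) :
    ∑ m, ‖u m‖ * ‖v m‖ ≤ 1 := by
  have hsq : ∀ w : n → ℂ, ∑ m, w m * conj (w m) = 1 → ∑ m, ‖w m‖ ^ 2 = 1 := by
    intro w hw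
    simp_rw [mul_conj', ← ofReal_pow, ← ofReal_sum] at hw
    exact_mod_cast hw
  calc ∑ m, ‖u m‖ * ‖v m‖ ≤ ∑ m, (‖u m‖ ^ 2 + ‖v m‖ ^ 2) / 2 :=
        sum_le_sum fun m _ => by nlinarith [sq_nonneg (‖u m‖ - ‖v m‖)]
    _ = 1 := by rw [← sum_div, sum_add_distrib, hsq u hu, hsq v hv]; norm_num

theorem sum_sum_mul_mul_le_sum_sum_sq_mul {ι : Type*} (s : Finset ι) (w : ι → ℝ)
    (g : ι → ι → ℝ) (hg : ∀ j k, 0 ≤ g j k) (hsymm : ∀ j k, g j k = g k j) :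
    ∑ j ∈ s, ∑ k ∈ s, w j * w k * g j k ≤ ∑ j ∈ s, ∑ k ∈ s, w j ^ 2 * g j k := by
  have hswap : ∑ j ∈ s, ∑ k ∈ s, w k ^ 2 * g j k = ∑ j ∈ s, ∑ k ∈ s, w j ^ 2 * g j k := by
    rw [sum_comm]; simp_rw [hsymm]
  have hamgm : ∀ j k, 2 * (w j * w k * g j k) ≤ w j ^ 2 * g j k + w k ^ 2 * g j k := by
    intro j k
    nlinarith [mul_nonneg (sq_nonneg (w j - w k)) (hg j k)]
  suffices 2 * ∑ j ∈ s, ∑ k ∈ s, w j * w k * g j k ≤ 2 * ∑ j ∈ s, ∑ k ∈ s, w j ^ 2 * g j k by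
    linarith
  calc 2 * ∑ j ∈ s, ∑ k ∈ s, w j * w k * g j k
      ≤ ∑ j ∈ s, ∑ k ∈ s, (w j ^ 2 * g j k + w k ^ 2 * g j k) := by
        rw [mul_sum]; gcongr with j _; rw [mul_sum]; gcongr with k _; exact hamgm j k
    _ = 2 * ∑ j ∈ s, ∑ k ∈ s, w j ^ 2 * g j k := by
        simp only [sum_add_distrib, hswap]; ring

theorem stmt_12_general (N : ℕ)
    (lam : Fin N → ℝ) (φ : Fin N → Fin N → ℂ)
    (horth : ∀ j k : Fin N,
      ∑ m : Fin N, φ j m * (starRingEnd ℂ) (φ k m) = if j = k then 1 else 0)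
    (H : Matrix (Fin N) (Fin N) ℂ)
    (hH : ∀ m m' : Fin N,
      H m m' = ∑ j : Fin N, (lam j : ℂ) * φ j m * (starRingEnd ℂ) (φ j m'))
    (c : Fin N) (T : ℝ) (hT : 0 < T) :
    ∑ m : Fin N,
        ‖(((1 / T) * ∫ τ in (0 : ℝ)..T,
              ‖(NormedSpace.exp (((-Complex.I) * (τ : ℂ)) • H)) m c‖ ^ 2 : ℝ) : ℂ)
            - ∑ j : Fin N, ∑ k : Fin N,
                (if lam j = lam k
                  then φ j m * (starRingEnd ℂ) (φ j c) * (starRingEnd ℂ) (φ k m) * φ k c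
                  else 0)‖
      ≤ (2 / T) * ∑ j : Fin N, ∑ k : Fin N,
          (if lam j ≠ lam k then ‖φ j c‖ ^ 2 / |lam j - lam k| else 0) := by
  set a : Fin N → Fin N → ℂ := fun m j => φ j m * conj (φ j c)
  have hexp : ∀ (τ : ℝ) m, NormedSpace.exp ((-I * τ) • H) m c
      = ∑ j, cexp (-I * τ * lam j) * a m j :=
    fun τ m => Matrix.exp_smul_apply_of_orthonormal (fun j => lam j) φ horth H hH _ m c
  have hπ : ∀ m j k, φ j m * conj (φ j c) * conj (φ k m) * φ k c = a m j * conj (a m k) := by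
    intro m j k
    simp only [a, map_mul, conj_conj]
    ring
  have hgap : ∀ j k, (if lam j ≠ lam k then ‖φ j c‖ ^ 2 / |lam j - lam k| else 0)
      = ‖φ j c‖ ^ 2 * |lam j - lam k|⁻¹ := by
    intro j k
    split_ifs with h
    · exact div_eq_mul_inv _ _
    · simp [not_not.mp h]
  calc _ = ∑ m, ‖((T⁻¹ * ∫ τ in (0 : ℝ)..T, ‖∑ j, cexp (-I * τ * lam j) * a m j‖ ^ 2 : ℝ) : ℂ)
          - ∑ j, ∑ k, (if lam j = lam k then a m j * conj (a m k) else 0)‖ := by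
        simp only [hexp, hπ, one_div]
    _ ≤ ∑ m, 2 / T * ∑ j, ∑ k, ‖a m j‖ * ‖a m k‖ * |lam j - lam k|⁻¹ :=
        sum_le_sum fun m _ => norm_timeAverage_sub_le lam (a m) hT
    _ = 2 / T * ∑ j, ∑ k, (∑ m, ‖φ j m‖ * ‖φ k m‖) * (‖φ j c‖ * ‖φ k c‖ * |lam j - lam k|⁻¹) := by
        rw [← mul_sum, sum_comm]
        simp_rw [sum_mul]
        rw [sum_congr rfl fun j _ => sum_comm]
        simp only [a, norm_mul, norm_conj]
        congr 1
        exact sum_congr rfl fun j _ => sum_congr rfl fun k _ => sum_congr rfl fun m _ => by ring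
    _ ≤ 2 / T * ∑ j, ∑ k, ‖φ j c‖ * ‖φ k c‖ * |lam j - lam k|⁻¹ := by
        refine mul_le_mul_of_nonneg_left
          (sum_le_sum fun j _ => sum_le_sum fun k _ => ?_) (by positivity)
        exact mul_le_of_le_one_left (by positivity)
          (sum_norm_mul_norm_le_one (by simpa using horth j j) (by simpa using horth k k))
    _ ≤ 2 / T * ∑ j, ∑ k, ‖φ j c‖ ^ 2 * |lam j - lam k|⁻¹ := by
        refine mul_le_mul_of_nonneg_left ?_ (by positivity)
        exact sum_sum_mul_mul_le_sum_sum_sq_mul _ _ _ (fun _ _ => by positivity)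
          (fun j k => by rw [abs_sub_comm])
    _ = _ := by simp only [hgap]

/-- AAKV Lemma 4.3 (continuous-time version). Let `H = ∑_j λ_j |φ^{(j)}⟩⟨φ^{(j)}|` be a
Hermitian `N×N` matrix with orthonormal eigenbasis `{φ^{(j)}}` and real eigenvalues
`{λ_j}`, let `p_τ(m|c) = |⟨m|e^{-iHτ}|c⟩|²` and
`π(m|c) = ∑_{(j,k): λ_j = λ_k} φ^{(j)}_m (φ^{(j)}_c)* (φ^{(k)}_m)* φ^{(k)}_c`. Then for
any `T > 0`,
`∑_m |(1/T)∫_0^T p_τ(m|c) dτ − π(m|c)| ≤ (2/T) ∑_{(j,k): λ_j ≠ λ_k} |φ^{(j)}_c|²/|λ_j − λ_k|`. -/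
theorem stmt_12 (N : ℕ) (hN : 1 ≤ N)
    (lam : Fin N → ℝ) (φ : Fin N → Fin N → ℂ)
    (horth : ∀ j k : Fin N,
      ∑ m : Fin N, φ j m * (starRingEnd ℂ) (φ k m) = if j = k then 1 else 0)
    (H : Matrix (Fin N) (Fin N) ℂ)
    (hH : ∀ m m' : Fin N,
      H m m' = ∑ j : Fin N, (lam j : ℂ) * φ j m * (starRingEnd ℂ) (φ j m'))
    (c : Fin N) (T : ℝ) (hT : 0 < T) :
    ∑ m : Fin N,
        ‖(((1 / T) * ∫ τ in (0 : ℝ)..T,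
              ‖(NormedSpace.exp (((-Complex.I) * (τ : ℂ)) • H)) m c‖ ^ 2 : ℝ) : ℂ)
            - ∑ j : Fin N, ∑ k : Fin N,
                (if lam j = lam k
                  then φ j m * (starRingEnd ℂ) (φ j c) * (starRingEnd ℂ) (φ k m) * φ k c
                  else 0)‖
      ≤ (2 / T) * ∑ j : Fin N, ∑ k : Fin N,
          (if lam j ≠ lam k then ‖φ j c‖ ^ 2 / |lam j - lam k| else 0) :=
  stmt_12_general N lam φ horth H hH c T hT
end

section
/- Railroad-switch gadget correctness: the sequence of three transitions — (i) conditioned on control qubit q₁, route to upper track applying identity, or lower track; (ii) apply σ^x to target q₂ only on the upper track; (iii) merge tracks — maps the state (a|0⟩_{q₁}|α⟩ + b|1⟩_{q₁}|β⟩) ⊗ |t−1⟩_c to (a|0⟩_{q₁}|α⟩ + b|1⟩_{q₁}(σ^x|β⟩)) ⊗ |t⟩_c, i.e., the composite effect on the work register is exactly CNOT_{q₁→q₂}. Formally: in the 4-dimensional clock space spanned by |c_{t−1}⟩, |track⟩, |track'⟩, |c_t⟩, the unitary following the three allowed transitions equals CNOT ⊗ |c_t⟩⟨c_{t−1}| on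 states starting in clock |c_{t−1}⟩. -/
open Matrix Kronecker

/-!
Each transition moves the clock by one matrix unit `|i⟩⟨j|`, and a product of matrix units
`|i⟩⟨j| |k⟩⟨l|` vanishes unless `j = k`. Since the two tracks use distinct clock states, the
upper and lower paths never mix: the composite is `(P₁ ⊗ σˣ) ⊗ |c_t⟩⟨c_{t−1}|` along the upper
track plus `(P₀ ⊗ 1) ⊗ |c_t⟩⟨c_{t−1}|` along the lower one (using `P₁² = P₁`, `P₀² = P₀`), and
`P₁ ⊗ σˣ + P₀ ⊗ 1` is CNOT.
-/

theorem isIdempotentElem_single_same {R n : Type*} [Semiring R] [Fintype n] [DecidableEq n]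
    (i : n) : IsIdempotentElem (single i i (1 : R)) := by
  rw [IsIdempotentElem, single_mul_single_same, mul_one]

namespace RailroadSwitch

variable {R ι κ τ : Type*} [CommSemiring R] [Fintype ι] [Fintype κ] [DecidableEq ι]
  [DecidableEq κ] [Fintype τ] [DecidableEq τ]

theorem switch_mul_eq {c u₁ u₂ l₁ l₂ c' : τ} (hu₁ : u₁ ≠ l₁) (hu₂ : u₂ ≠ l₂)
    {P₀ P₁ : Matrix ι ι R} (hP₀ : IsIdempotentElem P₀) (hP₁ : IsIdempotentElem P₁)
    (U : Matrix κ κ R) :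
    ((P₁ ⊗ₖ (1 : Matrix κ κ R)) ⊗ₖ single c' u₂ (1 : R) + (P₀ ⊗ₖ 1) ⊗ₖ single c' l₂ 1) *
        (((1 : Matrix ι ι R) ⊗ₖ U) ⊗ₖ single u₂ u₁ 1 + (1 ⊗ₖ 1) ⊗ₖ single l₂ l₁ 1) *
        ((P₁ ⊗ₖ 1) ⊗ₖ single u₁ c 1 + (P₀ ⊗ₖ 1) ⊗ₖ single l₁ c 1) =
      (P₁ ⊗ₖ U + P₀ ⊗ₖ 1) ⊗ₖ single c' c 1 := by
  simp only [add_mul, mul_add, ← mul_kronecker_mul, single_mul_single_same,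
    single_mul_single_of_ne _ _ _ _ hu₁, single_mul_single_of_ne _ _ _ _ hu₁.symm,
    single_mul_single_of_ne _ _ _ _ hu₂, single_mul_single_of_ne _ _ _ _ hu₂.symm,
    kronecker_zero, one_mul, mul_one, hP₀.eq, hP₁.eq, add_zero, zero_add, add_kronecker]

end RailroadSwitch

theorem cnot_eq_single_kronecker_add (CNOT : Matrix (Fin 2 × Fin 2) (Fin 2 × Fin 2) ℂ)
    (hCNOT : ∀ p q : Fin 2 × Fin 2,
      CNOT p q = if p.1 = q.1 ∧ p.2 = (if q.1 = 1 then q.2 + 1 else q.2) then 1 else 0) :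
    CNOT = single 1 1 1 ⊗ₖ !![0, 1; 1, 0] + single 0 0 1 ⊗ₖ (1 : Matrix (Fin 2) (Fin 2) ℂ) := by
  ext ⟨a, b⟩ ⟨d, e⟩
  rw [hCNOT]
  fin_cases a <;> fin_cases b <;> fin_cases d <;> fin_cases e <;> simp [single, one_apply]

/-- Clock basis `0 = c_{t−1}, 1 = u₁, 2 = u₂, 3 = l₁, 4 = l₂, 5 = c_t`. -/
theorem stmt_16
    (P0 P1 σx : Matrix (Fin 2) (Fin 2) ℂ)
    (hP0 : P0 = Matrix.single 0 0 1)
    (hP1 : P1 = Matrix.single 1 1 1)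
    (hσx : σx = !![0, 1; 1, 0])
    (E : Fin 6 → Fin 6 → Matrix (Fin 6) (Fin 6) ℂ)
    (hE : ∀ i j, E i j = Matrix.single i j 1)
    (CNOT : Matrix (Fin 2 × Fin 2) (Fin 2 × Fin 2) ℂ)
    (hCNOT : ∀ p q : Fin 2 × Fin 2,
      CNOT p q = if p.1 = q.1 ∧ p.2 = (if q.1 = 1 then q.2 + 1 else q.2) then 1 else 0)
    (T1 T2 T3 : Matrix ((Fin 2 × Fin 2) × Fin 6) ((Fin 2 × Fin 2) × Fin 6) ℂ)
    (hT1 : T1 = (P1 ⊗ₖ (1 : Matrix (Fin 2) (Fin 2) ℂ)) ⊗ₖ E 1 0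
              + (P0 ⊗ₖ (1 : Matrix (Fin 2) (Fin 2) ℂ)) ⊗ₖ E 3 0)
    (hT2 : T2 = ((1 : Matrix (Fin 2) (Fin 2) ℂ) ⊗ₖ σx) ⊗ₖ E 2 1
              + ((1 : Matrix (Fin 2) (Fin 2) ℂ) ⊗ₖ (1 : Matrix (Fin 2) (Fin 2) ℂ)) ⊗ₖ E 4 3)
    (hT3 : T3 = (P1 ⊗ₖ (1 : Matrix (Fin 2) (Fin 2) ℂ)) ⊗ₖ E 5 2
              + (P0 ⊗ₖ (1 : Matrix (Fin 2) (Fin 2) ℂ)) ⊗ₖ E 5 4) :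
    T3 * T2 * T1 = CNOT ⊗ₖ E 5 0 := by
  subst hP0 hP1 hσx hT1 hT2 hT3
  simp only [hE]
  rw [RailroadSwitch.switch_mul_eq (by decide) (by decide) (isIdempotentElem_single_same 0)
    (isIdempotentElem_single_same 1), cnot_eq_single_kronecker_add CNOT hCNOT]
end
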